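/- Let z ∈ ℝ^n with ‖z‖₁ = 1, satisfying the μ-complexity bound ‖z⁻‖₁ ≤ μ‖z⁺‖₁, and let ε > 0, q_m ∈ ℕ. For q ∈ ℕ define W_q⁺ = {i : zᵢ ∈ (2^{-q-1}, 2^{-q}]} and call W_q⁺ important if Σ_{i∈W_q⁺} zᵢ ≥ ε/((μ+1)·q_m). Suppose Σ_{i : 0 < zᵢ < 2^{-q_m}} zᵢ ≤ ε/(μ+1). Then Σ over important weight classes q ≤ q_m of Σ_{i∈W_q⁺} zᵢ ≥ (1 − 2ε)·‖z⁺‖₁. -/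
import Mathlib

theorem important_weight_classes_capture (n : ℕ) (z : Fin n → ℝ) (μ ε : ℝ)
    (hμ : 0 ≤ μ) (hε : 0 < ε) (qm : ℕ)
    (hnorm : ∑ i, |z i| = 1)
    (hcomplex : ∑ i ∈ Finset.univ.filter (fun i => z i < 0), |z i|
      ≤ μ * ∑ i ∈ Finset.univ.filter (fun i => 0 < z i), z i)
    (htail : ∑ i ∈ Finset.univ.filter (fun i => 0 < z i ∧ z i < (2 : ℝ) ^ (-(qm : ℤ))), z i
      ≤ ε / (μ + 1)) :
    ∑ q ∈ (Finset.range (qm + 1)).filter (fun q : ℕ =>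
        ε / ((μ + 1) * qm) ≤
          ∑ i ∈ Finset.univ.filter
            (fun i => (2 : ℝ) ^ (-(q : ℤ) - 1) < z i ∧ z i ≤ (2 : ℝ) ^ (-(q : ℤ))), z i),
      ∑ i ∈ Finset.univ.filter
          (fun i => (2 : ℝ) ^ (-(q : ℤ) - 1) < z i ∧ z i ≤ (2 : ℝ) ^ (-(q : ℤ))), z i
    ≥ (1 - 2 * ε) * ∑ i ∈ Finset.univ.filter (fun i => 0 < z i), z i := by
  classical
  set P : Finset (Fin n) := Finset.univ.filter (fun i => 0 < z i) with hPdef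
  set S : ℝ := ∑ i ∈ P, z i with hSdef
  set C : ℕ → Finset (Fin n) := fun q => Finset.univ.filter
      (fun i => (2 : ℝ) ^ (-(q : ℤ) - 1) < z i ∧ z i ≤ (2 : ℝ) ^ (-(q : ℤ))) with hCdef
  set f : ℕ → ℝ := fun q => ∑ i ∈ C q, z i with hfdef
  have hμ1 : (0:ℝ) < μ + 1 := by linarith
  -- positivity of class entries
  have hCpos : ∀ q, ∀ i ∈ C q, 0 < z i := by
    intro q i hi
    rw [hCdef] at hi
    simp only [Finset.mem_filter, Finset.mem_univ, true_and] at hi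
    have : (0:ℝ) < (2 : ℝ) ^ (-(q : ℤ) - 1) := by positivity
    linarith [hi.1]
  have hfnonneg : ∀ q, 0 ≤ f q := by
    intro q
    exact Finset.sum_nonneg fun i hi => (hCpos q i hi).le
  have hSnonneg : 0 ≤ S :=
    Finset.sum_nonneg fun i hi => (Finset.mem_filter.mp hi).2.le
  -- 1 ≤ (μ+1) * S
  have hS1 : (1:ℝ) ≤ (μ + 1) * S := by
    have hsplit := Finset.sum_filter_add_sum_filter_not Finset.univ
      (fun i => 0 < z i) (fun i => |z i|)
    have h1 : ∑ i ∈ Finset.univ.filter (fun i => 0 < z i), |z i| = S := by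
      rw [hSdef]
      exact Finset.sum_congr rfl fun i hi =>
        abs_of_pos (Finset.mem_filter.mp hi).2
    have h2 : ∑ i ∈ Finset.univ.filter (fun i => ¬ 0 < z i), |z i|
        = ∑ i ∈ Finset.univ.filter (fun i => z i < 0), |z i| := by
      rw [← Finset.sum_filter_add_sum_filter_not
        (Finset.univ.filter (fun i => ¬ 0 < z i)) (fun i => z i < 0) (fun i => |z i|)]
      have hA : (Finset.univ.filter (fun i => ¬ 0 < z i)).filter (fun i => z i < 0)
          = Finset.univ.filter (fun i => z i < 0) := by
        ext i
        simp only [Finset.mem_filter, Finset.mem_univ, true_and, not_lt]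
        constructor
        · exact fun h => h.2
        · exact fun h => ⟨h.le, h⟩
      have hB : ∑ i ∈ (Finset.univ.filter (fun i => ¬ 0 < z i)).filter
          (fun i => ¬ z i < 0), |z i| = 0 := by
        apply Finset.sum_eq_zero
        intro i hi
        simp only [Finset.mem_filter, Finset.mem_univ, true_and, not_lt] at hi
        have : z i = 0 := le_antisymm hi.1 hi.2
        simp [this]
      rw [hA, hB, add_zero]
    rw [h1, h2, hnorm] at hsplit
    nlinarith [hcomplex]
  -- the important/unimportant split
  set thr : ℝ := ε / ((μ + 1) * qm) with hthr
  -- every positive entry not in the tail belongs to some class q ≤ qm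
  have hzle1 : ∀ i, z i ≤ 1 := by
    intro i
    calc z i ≤ |z i| := le_abs_self _
    _ ≤ ∑ j, |z j| := Finset.single_le_sum (fun j _ => abs_nonneg (z j)) (Finset.mem_univ i)
    _ = 1 := hnorm
  have hmem : ∀ i, 0 < z i → (2:ℝ) ^ (-(qm:ℤ)) ≤ z i → ∃ q ≤ qm, i ∈ C q := by
    intro i hpos hge
    set k : ℤ := Int.clog 2 (z i) with hk
    have h2R : ((2:ℕ):ℝ) = (2:ℝ) := by norm_num
    have hub : z i ≤ (2:ℝ) ^ k := by
      have := Int.self_le_zpow_clog (b := 2) (one_lt_two) (z i)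
      rwa [h2R] at this
    have hlb : (2:ℝ) ^ (k - 1) < z i := by
      have := Int.zpow_pred_clog_lt_self (b := 2) (r := z i) (one_lt_two) hpos
      rwa [h2R] at this
    have hk0 : k ≤ 0 := by
      have : z i ≤ ((2:ℕ):ℝ) ^ (0:ℤ) := by rw [h2R]; simpa using hzle1 i
      exact (Int.le_zpow_iff_clog_le one_lt_two hpos).mp this
    have hkqm : -(qm:ℤ) ≤ k := by
      have h2 : (2:ℝ) ^ (-(qm:ℤ)) ≤ (2:ℝ) ^ k := le_trans hge hub
      exact_mod_cast (zpow_le_zpow_iff_right₀ (by norm_num : (1:ℝ) < 2)).mp h2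
    refine ⟨(-k).toNat, ?_, ?_⟩
    · omega
    · rw [hCdef]
      simp only [Finset.mem_filter, Finset.mem_univ, true_and]
      have hcast : (((-k).toNat : ℤ)) = -k := Int.toNat_of_nonneg (by omega)
      constructor
      · rw [hcast]; simpa [neg_neg, sub_eq_add_neg, add_comm] using hlb
      · rw [hcast]; simpa using hub
  -- classes are pairwise disjoint
  have hkey : ∀ a b : ℕ, a < b → Disjoint (C a) (C b) := by
    intro a b h
    refine Finset.disjoint_left.mpr ?_
    intro i hia hib
    rw [hCdef] at hia hib
    simp only [Finset.mem_filter, Finset.mem_univ, true_and] at hia hib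
    have h1 : (2:ℝ) ^ (-(b:ℤ)) ≤ (2:ℝ) ^ (-(a:ℤ) - 1) := by
      apply zpow_le_zpow_right₀ (by norm_num : (1:ℝ) ≤ 2)
      omega
    linarith [hib.2, hia.1]
  have hdisj : (↑(Finset.range (qm + 1)) : Set ℕ).PairwiseDisjoint C := by
    intro a _ b _ hab
    rcases lt_or_gt_of_ne hab with h | h
    · exact hkey a b h
    · exact (hkey b a h).symm
  set U : Finset (Fin n) := (Finset.range (qm + 1)).biUnion C with hUdef
  have hUsum : ∑ i ∈ U, z i = ∑ q ∈ Finset.range (qm + 1), f q := by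
    rw [hUdef]
    exact Finset.sum_biUnion hdisj
  have hUP : U ⊆ P := by
    intro i hi
    rw [hUdef] at hi
    rcases Finset.mem_biUnion.mp hi with ⟨q, _, hq⟩
    rw [hPdef]
    simp only [Finset.mem_filter, Finset.mem_univ, true_and]
    exact hCpos q i hq
  -- total class sum is at least S - ε/(μ+1)
  have htotal : S - ε / (μ + 1) ≤ ∑ q ∈ Finset.range (qm + 1), f q := by
    have hsd : ∑ i ∈ P \ U, z i + ∑ i ∈ U, z i = S := Finset.sum_sdiff hUP
    have hsub : P \ U ⊆ Finset.univ.filter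
        (fun i => 0 < z i ∧ z i < (2 : ℝ) ^ (-(qm : ℤ))) := by
      intro i hi
      rcases Finset.mem_sdiff.mp hi with ⟨hiP, hiU⟩
      rw [hPdef] at hiP
      simp only [Finset.mem_filter, Finset.mem_univ, true_and] at hiP ⊢
      refine ⟨hiP, ?_⟩
      by_contra hcon
      push_neg at hcon
      rcases hmem i hiP hcon with ⟨q, hq, hiq⟩
      exact hiU (Finset.mem_biUnion.mpr ⟨q, Finset.mem_range.mpr (by omega), hiq⟩)
    have hle : ∑ i ∈ P \ U, z i ≤ ∑ i ∈ Finset.univ.filter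
        (fun i => 0 < z i ∧ z i < (2 : ℝ) ^ (-(qm : ℤ))), z i := by
      apply Finset.sum_le_sum_of_subset_of_nonneg hsub
      intro i hi _
      exact (Finset.mem_filter.mp hi).2.1.le
    linarith [hUsum]
  -- split into important and unimportant
  have hsplit2 := Finset.sum_filter_add_sum_filter_not (Finset.range (qm + 1))
    (fun q : ℕ => thr ≤ f q) f
  -- trivial case: 1 ≤ 2ε
  by_cases h12 : 1 ≤ 2 * ε
  · have hL : 0 ≤ ∑ q ∈ (Finset.range (qm + 1)).filter (fun q : ℕ => thr ≤ f q), f q :=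
      Finset.sum_nonneg fun q _ => hfnonneg q
    have hR : (1 - 2 * ε) * S ≤ 0 :=
      mul_nonpos_of_nonpos_of_nonneg (by linarith) hSnonneg
    exact le_trans hR hL
  push_neg at h12
  -- bound the unimportant sum by ε/(μ+1)
  have hunimp : ∑ q ∈ (Finset.range (qm + 1)).filter (fun q : ℕ => ¬ thr ≤ f q), f q
      ≤ ε / (μ + 1) := by
    by_cases hqm0 : qm = 0
    · have : (Finset.range (qm + 1)).filter (fun q : ℕ => ¬ thr ≤ f q) = ∅ := by
        apply Finset.filter_eq_empty_iff.mpr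
        intro q _
        rw [not_not, hthr, hqm0]
        simp only [Nat.cast_zero, mul_zero, div_zero]
        exact hfnonneg q
      rw [this, Finset.sum_empty]
      positivity
    · have hqm1 : 1 ≤ qm := by omega
      have hqmR : (1:ℝ) ≤ (qm:ℝ) := by exact_mod_cast hqm1
      have hthrpos : 0 < thr := by
        rw [hthr]; positivity
      have hthrlt : thr < 1/2 := by
        rw [hthr]
        have h1 : (1:ℝ) ≤ (μ + 1) * qm := by nlinarith
        calc ε / ((μ + 1) * qm) ≤ ε / 1 := by
              apply div_le_div_of_nonneg_left hε.le (by linarith) h1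
        _ = ε := div_one ε
        _ < 1/2 := by linarith
      set J : Finset ℕ := (Finset.range (qm + 1)).filter (fun q : ℕ => ¬ thr ≤ f q) with hJ
      -- class 0, if unimportant, is empty
      have hf0 : 0 ∈ J → f 0 = 0 := by
        intro h0
        rcases Finset.mem_filter.mp h0 with ⟨_, hlt⟩
        push_neg at hlt
        rcases Finset.eq_empty_or_nonempty (C 0) with he | ⟨i, hi⟩
        · rw [hfdef]; simp [he]
        · exfalso
          have hiz : (1:ℝ)/2 < z i := by
            have := hCpos 0 i hi
            rw [hCdef] at hi
            simp only [Finset.mem_filter, Finset.mem_univ, true_and] at hi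
            have : ((2:ℝ) ^ ((-(0:ℕ) : ℤ) - 1)) = 1/2 := by norm_num
            linarith [hi.1, this ▸ hi.1]
          have : z i ≤ f 0 := Finset.single_le_sum
            (fun j hj => (hCpos 0 j hj).le) hi
          linarith
      have hJsub : J ⊆ Finset.range (qm + 1) := Finset.filter_subset _ _
      have hmain : ∑ q ∈ J, f q ≤ (qm : ℝ) * thr := by
        have herase : ∑ q ∈ J.erase 0, f q = ∑ q ∈ J, f q := by
          by_cases h0 : 0 ∈ J
          · exact Finset.sum_erase _ (hf0 h0)
          · rw [Finset.erase_eq_of_notMem h0]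
        have hcard : (J.erase 0).card ≤ qm := by
          have h1 : J.erase 0 ⊆ (Finset.range (qm + 1)).erase 0 :=
            Finset.erase_subset_erase _ hJsub
          have h2 : ((Finset.range (qm + 1)).erase 0).card = qm := by
            rw [Finset.card_erase_of_mem (Finset.mem_range.mpr (by omega))]
            simp
          calc (J.erase 0).card ≤ ((Finset.range (qm + 1)).erase 0).card :=
                Finset.card_le_card h1
          _ = qm := h2
        have hbound : ∑ q ∈ J.erase 0, f q ≤ ((J.erase 0).card : ℝ) * thr := by
          have := Finset.sum_le_card_nsmul (J.erase 0) f thr (by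
            intro q hq
            have := Finset.mem_filter.mp (Finset.mem_of_mem_erase hq)
            push_neg at this
            exact (this.2).le)
          simpa [nsmul_eq_mul] using this
        calc ∑ q ∈ J, f q = ∑ q ∈ J.erase 0, f q := herase.symm
        _ ≤ ((J.erase 0).card : ℝ) * thr := hbound
        _ ≤ (qm : ℝ) * thr := by
            apply mul_le_mul_of_nonneg_right _ hthrpos.le
            exact_mod_cast hcard
      have hfinal : (qm : ℝ) * thr = ε / (μ + 1) := by
        rw [hthr]
        field_simp
      linarith [hmain]
  -- conclude
  have hDmul : (ε / (μ + 1)) * (μ + 1) = ε := div_mul_cancel₀ ε (by linarith)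
  have himp : ∑ q ∈ (Finset.range (qm + 1)).filter (fun q : ℕ => thr ≤ f q), f q
      ≥ S - 2 * (ε / (μ + 1)) := by
    linarith [hsplit2, htotal, hunimp]
  have hεS : ε / (μ + 1) ≤ ε * S := by
    rw [div_le_iff₀ hμ1] at *
    nlinarith [hS1]
  calc ∑ q ∈ (Finset.range (qm + 1)).filter (fun q : ℕ => thr ≤ f q), f q
      ≥ S - 2 * (ε / (μ + 1)) := himp
  _ ≥ S - 2 * (ε * S) := by linarith
  _ = (1 - 2 * ε) * S := by ring
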